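/- Let z ∈ ℝ^k, V ∈ ℝ^{n×d}, and W, W₀ ∈ ℝ^{d×k}, and define S(W) = {ℓ ∈ {1,…,d} : 1{(Wz)_ℓ ≥ 0} ≠ 1{(W₀z)_ℓ ≥ 0}}. Then the Jacobian mapping satisfies the deterministic perturbation bound ‖J(W) − J(W₀)‖ ≤ ‖z‖·‖V_{S(W)}‖, where V_{S(W)} is the submatrix of V consisting of the columns with index in S(W). -/

import Mathlib

open MeasureTheory ProbabilityTheory Matrix

noncomputable section

/-- Euclidean norm of a vector. -/
def evnorm {ι : Type*} [Fintype ι] (x : ι → ℝ) : ℝ := Real.sqrt (∑ i, x i ^ 2)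

/-- Spectral (ℓ2 operator) norm of a matrix. -/
def specNorm {m n : Type*} [Fintype m] [Fintype n] (A : Matrix m n ℝ) : ℝ :=
  ⨆ x : {x : n → ℝ // evnorm x ≤ 1}, evnorm (A.mulVec x)

/-- Jacobian mapping of `W ↦ V · ReLU(W z)`:
`J(W)_{i,(ℓ,j)} = V_{iℓ}·1{(Wz)_ℓ ≥ 0}·z_j`. -/
def jacobian {n d k : ℕ} (V : Matrix (Fin n) (Fin d) ℝ) (z : Fin k → ℝ)
    (W : Matrix (Fin d) (Fin k) ℝ) : Matrix (Fin n) (Fin d × Fin k) ℝ :=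
  Matrix.of fun i p => V i p.1 * (if 0 ≤ W.mulVec z p.1 then 1 else 0) * z p.2

/-- The set `S(W)` of coordinates `ℓ` where the indicators `1{(Wz)_ℓ ≥ 0}` and
`1{(W₀z)_ℓ ≥ 0}` differ. -/
def indChanges {d k : ℕ} (z : Fin k → ℝ) (W₀ W : Matrix (Fin d) (Fin k) ℝ) :
    Finset (Fin d) :=
  Finset.univ.filter fun ℓ =>
    (if 0 ≤ W.mulVec z ℓ then (1 : ℝ) else 0) ≠ (if 0 ≤ W₀.mulVec z ℓ then (1 : ℝ) else 0)

/-! Writing `δ` for the difference of the ReLU gates `1{(Wz)_ℓ ≥ 0} − 1{(W₀z)_ℓ ≥ 0}`, which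
vanishes off `S(W)` and lies in `[-1, 1]`, the Jacobian difference factors as
`V_{S(W)} · diag(δ|_{S(W)}) · K`, where `K x = (⟨z, x_ℓ⟩)_{ℓ ∈ S(W)}` has norm at most `‖z‖` by
Cauchy–Schwarz. Since `specNorm` is Mathlib's `L²` operator norm, submultiplicativity concludes. -/

open scoped Matrix.Norms.L2Operator

lemma evnorm_eq_norm {ι : Type*} [Fintype ι] (x : ι → ℝ) :
    evnorm x = ‖(WithLp.toLp 2 x : EuclideanSpace ℝ ι)‖ := by
  simp [evnorm, EuclideanSpace.norm_eq]

section L2OpNorm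

variable {m n : Type*} [Fintype m] [Fintype n] [DecidableEq n]

lemma specNorm_eq_l2_opNorm (A : Matrix m n ℝ) : specNorm A = ‖A‖ := by
  rw [l2_opNorm_def, ← ContinuousLinearMap.sSup_unitClosedBall_eq_norm, sSup_image']
  let e : {x : n → ℝ // evnorm x ≤ 1} ≃ Metric.closedBall (0 : EuclideanSpace ℝ n) 1 :=
    (WithLp.linearEquiv 2 ℝ (n → ℝ)).symm.toEquiv.subtypeEquiv fun x => by
      simp [evnorm_eq_norm]
  exact e.iSup_congr fun x => by simp [e, evnorm_eq_norm]

lemma l2_opNorm_le_of_sum_sq_le {A : Matrix m n ℝ} {C : ℝ} (hC : 0 ≤ C)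
    (h : ∀ x : n → ℝ, ∑ i, (A *ᵥ x) i ^ 2 ≤ C ^ 2 * ∑ j, x j ^ 2) : ‖A‖ ≤ C := by
  refine ContinuousLinearMap.opNorm_le_bound _ hC fun x => ?_
  refine (sq_le_sq₀ (norm_nonneg _) (by positivity)).mp ?_
  simpa [EuclideanSpace.norm_sq_eq, mul_pow] using h x.ofLp

end L2OpNorm

section BlockContract

variable {ι κ : Type*} [DecidableEq ι]

def blockContract (s : Finset ι) (z : κ → ℝ) : Matrix s (ι × κ) ℝ :=
  Matrix.of fun i p => if (i : ι) = p.1 then z p.2 else 0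

lemma blockContract_mulVec [Fintype ι] [Fintype κ] (s : Finset ι) (z : κ → ℝ)
    (x : ι × κ → ℝ) (i : s) : (blockContract s z *ᵥ x) i = ∑ j, z j * x (i, j) := by
  simp [blockContract, Matrix.mulVec, dotProduct, Fintype.sum_prod_type]

lemma l2_opNorm_blockContract_le [Fintype ι] [Fintype κ] [DecidableEq κ] (s : Finset ι)
    (z : κ → ℝ) : ‖blockContract s z‖ ≤ ‖(WithLp.toLp 2 z : EuclideanSpace ℝ κ)‖ := by
  refine l2_opNorm_le_of_sum_sq_le (norm_nonneg _) fun x => ?_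
  calc ∑ i, (blockContract s z *ᵥ x) i ^ 2 = ∑ i ∈ s, (∑ j, z j * x (i, j)) ^ 2 := by
        simp only [blockContract_mulVec]
        exact Finset.sum_coe_sort s fun i => (∑ j, z j * x (i, j)) ^ 2
    _ ≤ ∑ i ∈ s, (∑ j, z j ^ 2) * ∑ j, x (i, j) ^ 2 :=
        Finset.sum_le_sum fun i _ => Finset.sum_mul_sq_le_sq_mul_sq _ _ _
    _ ≤ ∑ i, (∑ j, z j ^ 2) * ∑ j, x (i, j) ^ 2 :=
        Finset.sum_le_univ_sum_of_nonneg fun i => by positivity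
    _ = ‖(WithLp.toLp 2 z : EuclideanSpace ℝ κ)‖ ^ 2 * ∑ p, x p ^ 2 := by
        rw [← Finset.mul_sum, Fintype.sum_prod_type, EuclideanSpace.norm_sq_eq]
        simp

end BlockContract

def reluGate {m ι : Type*} [Fintype ι] (W : Matrix m ι ℝ) (z : ι → ℝ) (ℓ : m) : ℝ :=
  if 0 ≤ W.mulVec z ℓ then 1 else 0

lemma abs_reluGate_sub_le_one {m ι : Type*} [Fintype ι] (W W₀ : Matrix m ι ℝ) (z : ι → ℝ)
    (ℓ : m) : |reluGate W z ℓ - reluGate W₀ z ℓ| ≤ 1 := by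
  unfold reluGate
  split_ifs <;> norm_num

section Jacobian

variable {n d k : ℕ} (z : Fin k → ℝ) (V : Matrix (Fin n) (Fin d) ℝ)
  (W W₀ : Matrix (Fin d) (Fin k) ℝ)

lemma reluGate_sub_eq_zero_of_notMem_indChanges {ℓ : Fin d} (h : ℓ ∉ indChanges z W₀ W) :
    reluGate W z ℓ - reluGate W₀ z ℓ = 0 := by
  simpa [indChanges, reluGate, sub_eq_zero] using h

lemma jacobian_sub_jacobian_apply (i : Fin n) (p : Fin d × Fin k) :
    (jacobian V z W - jacobian V z W₀) i p =
      V i p.1 * (reluGate W z p.1 - reluGate W₀ z p.1) * z p.2 := by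
  simp only [Matrix.sub_apply, jacobian, reluGate, Matrix.of_apply]
  ring

lemma jacobian_sub_jacobian :
    jacobian V z W - jacobian V z W₀ =
      V.submatrix id (fun ℓ : indChanges z W₀ W => (ℓ : Fin d)) *
        diagonal (fun ℓ : indChanges z W₀ W => reluGate W z ℓ - reluGate W₀ z ℓ) *
        blockContract (indChanges z W₀ W) z := by
  ext i p
  have hsum := Finset.sum_coe_sort (indChanges z W₀ W) fun ℓ =>
    V i ℓ * (reluGate W z ℓ - reluGate W₀ z ℓ) * if ℓ = p.1 then z p.2 else 0
  rw [jacobian_sub_jacobian_apply, Matrix.mul_apply]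
  simp only [Matrix.mul_diagonal, Matrix.submatrix_apply, id, blockContract, Matrix.of_apply]
  rw [hsum]
  simp only [mul_ite, mul_zero, Finset.sum_ite_eq']
  split_ifs with h
  · ring
  · rw [reluGate_sub_eq_zero_of_notMem_indChanges z W W₀ h]
    ring

end Jacobian

/-- deterministic perturbation bound
`‖J(W) − J(W₀)‖ ≤ ‖z‖ · ‖V_{S(W)}‖`. -/
theorem jacobian_perturbation_deterministic {n d k : ℕ} (z : Fin k → ℝ)
    (V : Matrix (Fin n) (Fin d) ℝ) (W W₀ : Matrix (Fin d) (Fin k) ℝ) :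
    specNorm (jacobian V z W - jacobian V z W₀) ≤
      evnorm z * specNorm (V.submatrix id (fun ℓ : indChanges z W₀ W => (ℓ : Fin d))) := by
  set S := indChanges z W₀ W
  set VS := V.submatrix id (fun ℓ : S => (ℓ : Fin d))
  set D := diagonal fun ℓ : S => reluGate W z ℓ - reluGate W₀ z ℓ
  have hD : ‖D‖ ≤ 1 := by
    rw [l2_opNorm_diagonal, pi_norm_le_iff_of_nonneg zero_le_one]
    exact fun ℓ => (Real.norm_eq_abs _).trans_le (abs_reluGate_sub_le_one W W₀ z ℓ)
  rw [specNorm_eq_l2_opNorm, specNorm_eq_l2_opNorm, evnorm_eq_norm, jacobian_sub_jacobian]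
  calc ‖VS * D * blockContract S z‖ ≤ ‖VS‖ * ‖D‖ * ‖blockContract S z‖ :=
        (l2_opNorm_mul _ _).trans (by gcongr; exact l2_opNorm_mul _ _)
    _ ≤ ‖VS‖ * 1 * ‖(WithLp.toLp 2 z : EuclideanSpace ℝ (Fin k))‖ := by
        gcongr
        exact l2_opNorm_blockContract_le S z
    _ = ‖(WithLp.toLp 2 z : EuclideanSpace ℝ (Fin k))‖ * ‖VS‖ := by ring
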